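/- Let 𝒞 be a codebook of M codewords with Xⁿ uniform on 𝒞 and Yⁿ a channel output, with metric q and Φ(x,y) = Pr(q(X̃ⁿ,y) ≥ q(x,y)) where X̃ⁿ is an independent copy of Xⁿ. For R > Θ ≥ 0 with M = e^{nR}, the list-decoding error probability P_e^Θ = Pr(|{x' ∈ 𝒞 : q(x',Yⁿ) ≥ q(Xⁿ,Yⁿ)}| > e^{nΘ}) satisfies P_e^Θ ≥ 1 − (1/(R−Θ)) · E[ −(1/n) log Φ(Xⁿ,Yⁿ) ]. -/

import Mathlib

open Finset Real
open scoped Classical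

/-- Probability of an event for a finite probability space given by a weight
function `p`. -/
noncomputable def prob {Ω : Type} [Fintype Ω] (p : Ω → ℝ) (E : Set Ω) : ℝ :=
  ∑ ω ∈ Finset.univ.filter (fun ω => ω ∈ E), p ω

/-!
Since the competing codeword `Xt` is uniform on `C`, `Φ(Xⁿ,Yⁿ)` is exactly `L / M`, where `L ≥ 1` is
the number of codewords scoring at least as well as the transmitted one. Whenever the list is short,
`L ≤ e^{nΘ}`, this gives `-(1/n) log Φ ≥ R - Θ`; Markov's inequality for the nonnegative variable
`-(1/n) log Φ` bounds the probability of a short list by `E[-(1/n) log Φ] / (R - Θ)`.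
-/

section Prob

variable {Ω : Type} [Fintype Ω] (p : Ω → ℝ)

lemma prob_mono (hp : ∀ ω, 0 ≤ p ω) {E F : Set Ω} (hEF : E ⊆ F) : prob p E ≤ prob p F :=
  sum_le_sum_of_subset_of_nonneg (monotone_filter_right _ fun _ _ ↦ @hEF _)
    fun ω _ _ ↦ hp ω

lemma prob_add_prob_compl (E : Set Ω) : prob p E + prob p Eᶜ = ∑ ω, p ω := by
  simp only [prob, Set.mem_compl_iff]
  exact sum_filter_add_sum_filter_not _ _ _

lemma prob_le_one (hp : ∀ ω, 0 ≤ p ω) (hsum : ∑ ω, p ω = 1) (E : Set Ω) : prob p E ≤ 1 :=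
  hsum ▸ sum_le_sum_of_subset_of_nonneg (filter_subset _ _) fun ω _ _ ↦ hp ω

lemma mul_prob_le_sum_mul (hp : ∀ ω, 0 ≤ p ω) {g : Ω → ℝ} (hg : ∀ ω, 0 ≤ g ω) (c : ℝ) :
    c * prob p {ω | c ≤ g ω} ≤ ∑ ω, p ω * g ω :=
  calc c * prob p {ω | c ≤ g ω}
      = ∑ ω ∈ univ.filter (· ∈ {ω | c ≤ g ω}), p ω * c := by
        rw [prob, mul_sum]; exact sum_congr rfl fun _ _ ↦ mul_comm _ _
    _ ≤ ∑ ω ∈ univ.filter (· ∈ {ω | c ≤ g ω}), p ω * g ω :=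
        sum_le_sum fun ω hω ↦ mul_le_mul_of_nonneg_left (mem_filter.mp hω).2 (hp ω)
    _ ≤ ∑ ω, p ω * g ω :=
        sum_le_sum_of_subset_of_nonneg (filter_subset _ _) fun ω _ _ ↦ mul_nonneg (hp ω) (hg ω)

lemma prob_comp_eq_card_filter_div {α : Type} {f : Ω → α} {C : Finset α} {M : ℝ}
    (hfC : ∀ ω, f ω ∈ C) (hunif : ∀ x ∈ C, prob p {ω | f ω = x} = 1 / M)
    (P : α → Prop) [DecidablePred P] :
    prob p {ω | P (f ω)} = (C.filter P).card / M := by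
  simp only [prob, Set.mem_ofPred_eq] at hunif ⊢
  have hmaps : ∀ ω ∈ univ.filter (fun ω ↦ P (f ω)), f ω ∈ C.filter P := fun ω hω ↦
    mem_filter.mpr ⟨hfC ω, (mem_filter.mp hω).2⟩
  have hfiber : ∀ x ∈ C.filter P,
      ∑ ω ∈ (univ.filter fun ω ↦ P (f ω)).filter (f · = x), p ω = 1 / M := fun x hx ↦ by
    rw [← hunif x (mem_filter.mp hx).1, filter_filter]
    refine sum_congr (filter_congr fun ω _ ↦ ?_) fun _ _ ↦ rfl
    exact ⟨And.right, fun h ↦ ⟨h ▸ (mem_filter.mp hx).2, h⟩⟩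
  rw [← sum_fiberwise_of_maps_to hmaps, sum_congr rfl hfiber, sum_const, nsmul_eq_mul, mul_one_div]

end Prob

lemma sub_le_neg_one_div_mul_log_div_exp {n R Θ L : ℝ} (hn : 0 < n) (hL : 0 < L)
    (hLΘ : L ≤ exp (n * Θ)) : R - Θ ≤ -(1 / n) * log (L / exp (n * R)) := by
  have hlog : log (L / exp (n * R)) ≤ n * Θ - n * R := by
    rw [log_div hL.ne' (exp_pos _).ne', log_exp]
    linarith [(log_le_iff_le_exp hL).mpr hLΘ]
  rw [neg_mul, le_neg, ← le_div_iff₀' (by positivity)]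
  field_simp
  linarith

theorem stmt_11_general {Ω 𝒳 𝒴 : Type} [Fintype Ω]
    (p : Ω → ℝ) (hp : ∀ ω, 0 ≤ p ω) (hsum : ∑ ω, p ω = 1)
    (C : Finset 𝒳) (M : ℕ)
    (n R Θ : ℝ) (hn : 0 < n) (hRΘ : Θ < R)
    (hMR : (M : ℝ) = Real.exp (n * R))
    (X Xt : Ω → 𝒳) (Y : Ω → 𝒴)
    (hXC : ∀ ω, X ω ∈ C)
    (hXtC : ∀ ω, Xt ω ∈ C)
    (hXtunif : ∀ x ∈ C, prob p {ω | Xt ω = x} = 1 / M)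
    (q : 𝒳 → 𝒴 → ℝ)
    (Φ : 𝒳 → 𝒴 → ℝ)
    (hΦ : ∀ x y, Φ x y = prob p {ω | q (Xt ω) y ≥ q x y}) :
    prob p {ω | ((C.filter (fun x' => q x' (Y ω) ≥ q (X ω) (Y ω))).card : ℝ)
        > Real.exp (n * Θ)}
      ≥ 1 - (1 / (R - Θ)) *
          ∑ ω, p ω * (-(1 / n) * Real.log (Φ (X ω) (Y ω))) := by
  set L : Ω → ℝ := fun ω ↦ (C.filter (fun x' ↦ q x' (Y ω) ≥ q (X ω) (Y ω))).card
  set f : Ω → ℝ := fun ω ↦ -(1 / n) * log (Φ (X ω) (Y ω))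
  have hΦL : ∀ ω, Φ (X ω) (Y ω) = L ω / M := fun ω ↦ by
    rw [hΦ]; exact prob_comp_eq_card_filter_div p hXtC hXtunif (q · (Y ω) ≥ q (X ω) (Y ω))
  have hL : ∀ ω, 0 < L ω := fun ω ↦ by
    have hmem : X ω ∈ C.filter (fun x' ↦ q x' (Y ω) ≥ q (X ω) (Y ω)) :=
      mem_filter.mpr ⟨hXC ω, le_rfl⟩
    exact Nat.cast_pos.mpr (card_pos.mpr ⟨X ω, hmem⟩)
  have hf : ∀ ω, 0 ≤ f ω := fun ω ↦ by
    have hΦ1 : Φ (X ω) (Y ω) ≤ 1 := hΦ _ _ ▸ prob_le_one p hp hsum _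
    have hΦ0 : 0 < Φ (X ω) (Y ω) := hΦL ω ▸ div_pos (hL ω) (hMR ▸ exp_pos _)
    exact mul_nonneg_of_nonpos_of_nonpos (by simp [hn.le]) (log_nonpos hΦ0.le hΦ1)
  have hshort : {ω | L ω > exp (n * Θ)}ᶜ ⊆ {ω | R - Θ ≤ f ω} := fun ω hω ↦ by
    show R - Θ ≤ f ω
    simpa only [f, hΦL, hMR] using sub_le_neg_one_div_mul_log_div_exp hn (hL ω) (not_lt.mp hω)
  have hmarkov : prob p {ω | R - Θ ≤ f ω} ≤ 1 / (R - Θ) * ∑ ω, p ω * f ω := by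
    rw [one_div_mul_eq_div, le_div_iff₀' (sub_pos.mpr hRΘ)]
    exact mul_prob_le_sum_mul p hp hf (R - Θ)
  calc 1 - 1 / (R - Θ) * ∑ ω, p ω * f ω
      ≤ 1 - prob p {ω | L ω > exp (n * Θ)}ᶜ := by linarith [prob_mono p hp hshort]
    _ = prob p {ω | L ω > exp (n * Θ)} := by
        linarith [hsum ▸ prob_add_prob_compl p {ω | L ω > exp (n * Θ)}]

/-- Theorem 8 (Fano-type lower bound for mismatched list decoding):
for `M = e^{nR}` and list size `e^{nΘ}`,
`P_e^Θ ≥ 1 - (1/(R-Θ)) E[-(1/n) log Φ(Xⁿ,Yⁿ)]`. -/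
theorem stmt_11 {Ω 𝒳 𝒴 : Type} [Fintype Ω] [Fintype 𝒳] [DecidableEq 𝒳]
    (p : Ω → ℝ) (hp : ∀ ω, 0 ≤ p ω) (hsum : ∑ ω, p ω = 1)
    (C : Finset 𝒳) (M : ℕ) (hC : C.card = M) (hM : 1 ≤ M)
    (n R Θ : ℝ) (hn : 0 < n) (hΘ : 0 ≤ Θ) (hRΘ : Θ < R)
    (hMR : (M : ℝ) = Real.exp (n * R))
    (X Xt : Ω → 𝒳) (Y : Ω → 𝒴)
    (hXC : ∀ ω, X ω ∈ C)
    (hXunif : ∀ x ∈ C, prob p {ω | X ω = x} = 1 / M)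
    (hXtC : ∀ ω, Xt ω ∈ C)
    (hXtunif : ∀ x ∈ C, prob p {ω | Xt ω = x} = 1 / M)
    (hindep : ∀ (x x' : 𝒳) (y : 𝒴),
      prob p {ω | Xt ω = x' ∧ X ω = x ∧ Y ω = y}
        = prob p {ω | Xt ω = x'} * prob p {ω | X ω = x ∧ Y ω = y})
    (q : 𝒳 → 𝒴 → ℝ)
    (Φ : 𝒳 → 𝒴 → ℝ)
    (hΦ : ∀ x y, Φ x y = prob p {ω | q (Xt ω) y ≥ q x y}) :
    prob p {ω | ((C.filter (fun x' => q x' (Y ω) ≥ q (X ω) (Y ω))).card : ℝ)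
        > Real.exp (n * Θ)}
      ≥ 1 - (1 / (R - Θ)) *
          ∑ ω, p ω * (-(1 / n) * Real.log (Φ (X ω) (Y ω))) :=
  stmt_11_general p hp hsum C M n R Θ hn hRΘ hMR X Xt Y hXC hXtC hXtunif q Φ hΦ
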